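/- arXiv:2005.09209 — 2 statements merged into one kernel-verified Lean document; each statement's English description precedes it below -/
import Mathlib

section
/- For the dataset D = {x₁=(0,0,−), x₂=(0,1,−), x₃=(0,3,+), x₄=(2,3,−)}, there is no nonempty feature set S ⊆ {f₁, f₂} such that (i) Φ_S(x_i) is the same value γ for all four data points and (ii) for every proper subset S' ⊂ S and every data point x_i, Φ_{S'}(x_i) < Φ_S(x_i). Hence no optimal non-trivial classifier satisfying fair privacy (feature-match) can simultaneously satisfy fair accuracy and need-to-know on D. -/
open Finset

/-- A finite dataset of feature vectors (features `ι`, values `V`) with labels `L`. -/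
structure Dataset (ι V L : Type*) where
  n : ℕ
  npos : 0 < n
  pt : Fin n → ι → V
  lab : Fin n → L

variable {ι V L : Type*} [DecidableEq ι] [DecidableEq V] [DecidableEq L] [Fintype L] [Nonempty L]

/-- The data points of `D` that agree with `x` on all features in `S`
(the conditioning event `Ω_S(X) = Ω_S(x)`). -/
def Dataset.mset (D : Dataset ι V L) (S : Finset ι) (x : ι → V) : Finset (Fin D.n) :=
  Finset.univ.filter (fun j => ∀ f ∈ S, D.pt j f = x f)

/-- Empirical posterior probability `Pr[Y(X) = c | Ω_S(X) = Ω_S(x)]`. -/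
noncomputable def post (D : Dataset ι V L) (S : Finset ι) (x : ι → V) (c : L) : ℝ :=
  (((D.mset S x).filter (fun j => D.lab j = c)).card : ℝ) / ((D.mset S x).card : ℝ)

/-- Predictive power `Φ_S(x)`: the maximal posterior probability of a label. -/
noncomputable def power (D : Dataset ι V L) (S : Finset ι) (x : ι → V) : ℝ :=
  Finset.univ.sup' Finset.univ_nonempty (post D S x)

/-- A (randomized) classifier gives, for each revealed feature set and input,
a probability distribution over output labels. -/
def IsDist (Yh : Finset ι → (ι → V) → L → ℝ) : Prop :=
  (∀ S x c, 0 ≤ Yh S x c) ∧ ∀ S x, ∑ c, Yh S x c = 1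

/-- The classifier's output distribution depends only on the revealed features. -/
def DependsOnly (Yh : Finset ι → (ι → V) → L → ℝ) : Prop :=
  ∀ S x x', (∀ f ∈ S, x f = x' f) → Yh S x = Yh S x'

/-- Prediction accuracy `acc(Ŷ(Ω_S(x)))`, expressed as `Σ_c p_c · p̂_c`. -/
noncomputable def acc (D : Dataset ι V L) (Yh : Finset ι → (ι → V) → L → ℝ)
    (S : Finset ι) (x : ι → V) : ℝ :=
  ∑ c, post D S x c * Yh S x c

/-- An optimal classifier: maximal accuracy for every data point and feature subset. -/
def IsOptimal (D : Dataset ι V L) (Yh : Finset ι → (ι → V) → L → ℝ) : Prop :=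
  IsDist Yh ∧ ∀ Yh', IsDist Yh' → ∀ (i : Fin D.n) (S : Finset ι),
    acc D Yh' S (D.pt i) ≤ acc D Yh S (D.pt i)

/-- Fair privacy (feature match): the same feature set is used for all data points. -/
def FairPrivacyMatch (D : Dataset ι V L) (σ : Fin D.n → Finset ι) : Prop :=
  ∃ S, ∀ i, σ i = S

/-- Non-triviality: a non-empty feature set is used for each data point. -/
def NonTrivial (D : Dataset ι V L) (σ : Fin D.n → Finset ι) : Prop :=
  ∀ i, σ i ≠ ∅

/-- Fair prediction accuracy: all data points are predicted with equal accuracy `γ ∈ (0,1]`. -/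
def FairAccuracy (D : Dataset ι V L) (Yh : Finset ι → (ι → V) → L → ℝ)
    (σ : Fin D.n → Finset ι) : Prop :=
  ∃ γ : ℝ, 0 < γ ∧ γ ≤ 1 ∧ ∀ i, acc D Yh (σ i) (D.pt i) = γ

/-- Need-to-know: every proper subset of the used feature set gives strictly lower accuracy. -/
def NeedToKnow (D : Dataset ι V L) (Yh : Finset ι → (ι → V) → L → ℝ)
    (σ : Fin D.n → Finset ι) : Prop :=
  ∀ i, ∀ S' ⊂ σ i, acc D Yh S' (D.pt i) < acc D Yh (σ i) (D.pt i)

/-- The illustrative dataset of Table 1: four points, two features, labels in `Bool`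
(`true` = "+", `false` = "−"). -/
def Dex : Dataset (Fin 2) ℕ Bool where
  n := 4
  npos := by norm_num
  pt := ![![0, 0], ![0, 1], ![0, 3], ![2, 3]]
  lab := ![false, false, true, false]

def i0 : Fin Dex.n := ⟨0, by norm_num [Dex]⟩
def i1 : Fin Dex.n := ⟨1, by norm_num [Dex]⟩
def i2 : Fin Dex.n := ⟨2, by norm_num [Dex]⟩
def i3 : Fin Dex.n := ⟨3, by norm_num [Dex]⟩

set_option linter.unusedSectionVars false in
lemma power_bool {ι V : Type*} [DecidableEq ι] [DecidableEq V]
    (D : Dataset ι V Bool) (S : Finset ι) (x : ι → V) :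
    power D S x = max (post D S x false) (post D S x true) := by
  apply le_antisymm
  · exact Finset.sup'_le _ _ (fun b _ => by cases b <;> simp)
  · exact max_le (Finset.le_sup' _ (mem_univ _)) (Finset.le_sup' _ (mem_univ _))

set_option linter.unusedSectionVars false in
lemma acc_eq_power (D : Dataset ι V L) (Yh : Finset ι → (ι → V) → L → ℝ)
    (h : IsOptimal D Yh) (i : Fin D.n) (S : Finset ι) :
    acc D Yh S (D.pt i) = power D S (D.pt i) := by
  classical
  obtain ⟨⟨hpos, hsum⟩, hmax⟩ := h
  apply le_antisymm
  · calc acc D Yh S (D.pt i) = ∑ c, post D S (D.pt i) c * Yh S (D.pt i) c := rfl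
      _ ≤ ∑ c, power D S (D.pt i) * Yh S (D.pt i) c :=
          Finset.sum_le_sum (fun c _ =>
            mul_le_mul_of_nonneg_right (Finset.le_sup' _ (mem_univ c)) (hpos _ _ _))
      _ = power D S (D.pt i) := by rw [← Finset.mul_sum, hsum, mul_one]
  · let pick : Finset ι → (ι → V) → L := fun S' x =>
      (Finset.exists_mem_eq_sup' Finset.univ_nonempty (post D S' x)).choose
    let Yh' : Finset ι → (ι → V) → L → ℝ := fun S' x c => if c = pick S' x then 1 else 0
    have hd : IsDist Yh' :=
      ⟨fun _ _ c => by dsimp only [Yh']; split <;> norm_num,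
       fun S' x => by simp [Yh']⟩
    have hle := hmax Yh' hd i S
    have hspec := (Finset.exists_mem_eq_sup' Finset.univ_nonempty (post D S (D.pt i))).choose_spec
    have hacc : acc D Yh' S (D.pt i) = post D S (D.pt i) (pick S (D.pt i)) := by
      rw [acc, Finset.sum_eq_single (pick S (D.pt i))]
      · simp [Yh']
      · intro c _ hc; simp [Yh', hc]
      · simp
    have hpow : power D S (D.pt i) = post D S (D.pt i) (pick S (D.pt i)) := hspec.2
    linarith

lemma pow_A : power Dex {0} (Dex.pt i2) = 2/3 := by
  have h1 : ((Dex.mset {0} (Dex.pt i2)).filter (fun j => Dex.lab j = false)).card = 2 := by decide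
  have h2 : ((Dex.mset {0} (Dex.pt i2)).filter (fun j => Dex.lab j = true)).card = 1 := by decide
  have h3 : (Dex.mset {0} (Dex.pt i2)).card = 3 := by decide
  rw [power_bool, post, post, h1, h2, h3]; norm_num

lemma pow_B : power Dex {0} (Dex.pt i3) = 1 := by
  have h1 : ((Dex.mset {0} (Dex.pt i3)).filter (fun j => Dex.lab j = false)).card = 1 := by decide
  have h2 : ((Dex.mset {0} (Dex.pt i3)).filter (fun j => Dex.lab j = true)).card = 0 := by decide
  have h3 : (Dex.mset {0} (Dex.pt i3)).card = 1 := by decide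
  rw [power_bool, post, post, h1, h2, h3]; norm_num

lemma pow_C : power Dex {1} (Dex.pt i0) = 1 := by
  have h1 : ((Dex.mset {1} (Dex.pt i0)).filter (fun j => Dex.lab j = false)).card = 1 := by decide
  have h2 : ((Dex.mset {1} (Dex.pt i0)).filter (fun j => Dex.lab j = true)).card = 0 := by decide
  have h3 : (Dex.mset {1} (Dex.pt i0)).card = 1 := by decide
  rw [power_bool, post, post, h1, h2, h3]; norm_num

lemma pow_D : power Dex {1} (Dex.pt i2) = 1/2 := by
  have h1 : ((Dex.mset {1} (Dex.pt i2)).filter (fun j => Dex.lab j = false)).card = 1 := by decide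
  have h2 : ((Dex.mset {1} (Dex.pt i2)).filter (fun j => Dex.lab j = true)).card = 1 := by decide
  have h3 : (Dex.mset {1} (Dex.pt i2)).card = 2 := by decide
  rw [power_bool, post, post, h1, h2, h3]; norm_num

lemma pow_E : power Dex {0, 1} (Dex.pt i3) = 1 := by
  have h1 : ((Dex.mset {0, 1} (Dex.pt i3)).filter (fun j => Dex.lab j = false)).card = 1 := by decide
  have h2 : ((Dex.mset {0, 1} (Dex.pt i3)).filter (fun j => Dex.lab j = true)).card = 0 := by decide
  have h3 : (Dex.mset {0, 1} (Dex.pt i3)).card = 1 := by decide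
  rw [power_bool, post, post, h1, h2, h3]; norm_num

lemma part1 : ¬ ∃ S : Finset (Fin 2), S.Nonempty ∧
    (∃ γ : ℝ, ∀ i : Fin Dex.n, power Dex S (Dex.pt i) = γ) ∧
    (∀ (i : Fin Dex.n), ∀ S' ⊂ S,
      power Dex S' (Dex.pt i) < power Dex S (Dex.pt i)) := by
  rintro ⟨S, hne, ⟨γ, hγ⟩, hntk⟩
  by_cases h0 : (0 : Fin 2) ∈ S <;> by_cases h1 : (1 : Fin 2) ∈ S
  · have hS : S = {0, 1} := by
      ext a; fin_cases a <;> simp [h0, h1]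
    have hlt := hntk i3 {0} (by rw [hS]; decide)
    rw [hS, pow_E, pow_B] at hlt
    exact lt_irrefl _ hlt
  · have hS : S = {0} := by
      ext a; fin_cases a <;> simp [h0, h1]
    have e1 := hγ i2; have e2 := hγ i3
    rw [hS, pow_A] at e1; rw [hS, pow_B] at e2
    rw [← e2] at e1; norm_num at e1
  · have hS : S = {1} := by
      ext a; fin_cases a <;> simp [h0, h1]
    have e1 := hγ i0; have e2 := hγ i2
    rw [hS, pow_C] at e1; rw [hS, pow_D] at e2
    rw [← e2] at e1; norm_num at e1
  · obtain ⟨a, ha⟩ := hne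
    fin_cases a <;> [exact h0 ha; exact h1 ha]

/-- for the illustrative dataset, no nonempty feature set has constant
predictive power across all points while every proper subset has strictly lower
predictive power everywhere; hence no optimal non-trivial classifier satisfying fair
privacy (feature match) can also satisfy fair accuracy and need-to-know on `Dex`. -/

theorem stmt9 :
    (¬ ∃ S : Finset (Fin 2), S.Nonempty ∧
        (∃ γ : ℝ, ∀ i : Fin Dex.n, power Dex S (Dex.pt i) = γ) ∧
        (∀ (i : Fin Dex.n), ∀ S' ⊂ S,
          power Dex S' (Dex.pt i) < power Dex S (Dex.pt i))) ∧
    (¬ ∃ (Yh : Finset (Fin 2) → (Fin 2 → ℕ) → Bool → ℝ) (σ : Fin Dex.n → Finset (Fin 2)),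
        IsOptimal Dex Yh ∧ NonTrivial Dex σ ∧ FairPrivacyMatch Dex σ ∧
        FairAccuracy Dex Yh σ ∧ NeedToKnow Dex Yh σ) := by 
  refine ⟨part1, ?_⟩
  rintro ⟨Yh, σ, hopt, hnt, ⟨S, hσ⟩, ⟨γ, -, -, hacc⟩, hntk⟩
  apply part1
  refine ⟨S, ?_, ⟨γ, fun i => ?_⟩, fun i S' hS' => ?_⟩
  · rw [Finset.nonempty_iff_ne_empty]
    exact hσ i0 ▸ hnt i0
  · rw [← acc_eq_power Dex Yh hopt i S, ← hσ i]
    exact hacc i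
  · have := hntk i S' (hσ i ▸ hS')
    rw [hσ i, acc_eq_power Dex Yh hopt i S, acc_eq_power Dex Yh hopt i S'] at this
    exact this
end

section
/- There exists an optimal non-trivial classifier satisfying fair privacy (feature-match), fair accuracy, and need-to-know on a dataset D if and only if there exists a non-empty S ⊆ F such that (i) there is γ ∈ (0,1] with Φ_S(x_i) = γ for all x_i ∈ D, and (ii) for all x_i ∈ D and all proper subsets S' ⊂ S, Φ_{S'}(x_i) < Φ_S(x_i). -/
open Finset

variable {ι V L : Type*} [DecidableEq ι] [DecidableEq V] [DecidableEq L] [Fintype L] [Nonempty L]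

lemma post_nonneg (D : Dataset ι V L) (S : Finset ι) (x : ι → V) (c : L) :
    0 ≤ post D S x c := by
  unfold post; positivity

lemma acc_le_power (D : Dataset ι V L) {Yh : Finset ι → (ι → V) → L → ℝ}
    (h : IsDist Yh) (S : Finset ι) (x : ι → V) :
    acc D Yh S x ≤ power D S x := by
  calc acc D Yh S x ≤ ∑ c, power D S x * Yh S x c := by
        apply Finset.sum_le_sum
        intro c _
        exact mul_le_mul_of_nonneg_right (Finset.le_sup' (post D S x) (mem_univ c)) (h.1 S x c)
    _ = power D S x := by rw [← Finset.mul_sum, h.2 S x, mul_one]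

noncomputable def bestLab (D : Dataset ι V L) (S : Finset ι) (x : ι → V) : L :=
  (Finset.exists_mem_eq_sup' Finset.univ_nonempty (post D S x)).choose

lemma post_bestLab (D : Dataset ι V L) (S : Finset ι) (x : ι → V) :
    post D S x (bestLab D S x) = power D S x :=
  ((Finset.exists_mem_eq_sup' Finset.univ_nonempty (post D S x)).choose_spec).2.symm

noncomputable def Yhopt (D : Dataset ι V L) : Finset ι → (ι → V) → L → ℝ :=
  fun S x c => if c = bestLab D S x then 1 else 0

lemma Yhopt_isDist (D : Dataset ι V L) : IsDist (Yhopt D) := by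
  constructor
  · intro S x c; unfold Yhopt; split <;> norm_num
  · intro S x; simp [Yhopt]

lemma acc_Yhopt (D : Dataset ι V L) (S : Finset ι) (x : ι → V) :
    acc D (Yhopt D) S x = power D S x := by
  rw [← post_bestLab D S x]
  simp [acc, Yhopt, mul_ite]

lemma Yhopt_isOptimal (D : Dataset ι V L) : IsOptimal D (Yhopt D) := by
  refine ⟨Yhopt_isDist D, fun Yh' h' i S => ?_⟩
  rw [acc_Yhopt]
  exact acc_le_power D h' S (D.pt i)

lemma acc_eq_power_of_optimal (D : Dataset ι V L) {Yh : Finset ι → (ι → V) → L → ℝ}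
    (h : IsOptimal D Yh) (i : Fin D.n) (S : Finset ι) :
    acc D Yh S (D.pt i) = power D S (D.pt i) := by
  refine le_antisymm (acc_le_power D h.1 S (D.pt i)) ?_
  have := h.2 (Yhopt D) (Yhopt_isDist D) i S
  rwa [acc_Yhopt] at this

/-- Theorem 1: an optimal non-trivial classifier satisfying fair privacy
(feature match), fair accuracy, and need-to-know exists for `D` iff there is a nonempty
`S ⊆ F` whose predictive power is a constant `γ ∈ (0,1]` on all points and strictly
dominates the predictive power of each of its proper subsets at every point. -/
theorem stmt11 (D : Dataset ι V L) :
    (∃ (Yh : Finset ι → (ι → V) → L → ℝ) (σ : Fin D.n → Finset ι),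
        IsOptimal D Yh ∧ NonTrivial D σ ∧ FairPrivacyMatch D σ ∧
        FairAccuracy D Yh σ ∧ NeedToKnow D Yh σ) ↔
    (∃ S : Finset ι, S.Nonempty ∧
        (∃ γ : ℝ, 0 < γ ∧ γ ≤ 1 ∧ ∀ i : Fin D.n, power D S (D.pt i) = γ) ∧
        (∀ (i : Fin D.n), ∀ S' ⊂ S,
          power D S' (D.pt i) < power D S (D.pt i))) := by
  constructor
  · rintro ⟨Yh, σ, hopt, hnt, ⟨S, hS⟩, ⟨γ, hγ0, hγ1, hγ⟩, hntk⟩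
    have i0 : Fin D.n := ⟨0, D.npos⟩
    refine ⟨S, ?_, ⟨γ, hγ0, hγ1, fun i => ?_⟩, fun i S' hS' => ?_⟩
    · rw [← Finset.nonempty_iff_ne_empty.symm, ← hS i0]; exact hnt i0
    · rw [← acc_eq_power_of_optimal D hopt i S, ← hS i]; exact hγ i
    · have := hntk i S' (by rw [hS i]; exact hS')
      rw [hS i] at this
      rwa [acc_eq_power_of_optimal D hopt i S', acc_eq_power_of_optimal D hopt i S] at this
  · rintro ⟨S, hSne, ⟨γ, hγ0, hγ1, hγ⟩, hdom⟩
    refine ⟨Yhopt D, fun _ => S, Yhopt_isOptimal D, fun i => Finset.nonempty_iff_ne_empty.mp hSne,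
      ⟨S, fun _ => rfl⟩, ⟨γ, hγ0, hγ1, fun i => by rw [acc_Yhopt]; exact hγ i⟩,
      fun i S' hS' => by rw [acc_Yhopt, acc_Yhopt]; exact hdom i S' hS'⟩
end
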